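/- Let 0 < s ≤ 1 and f ∈ ST_hpl(s) with inverse f^{-1}(w) = w + ∑_{n≥2} A_n w^n near 0, and λ ∈ ℝ. Then |A₃ − λA₂²| ≤ s²((5s−1)/(4s) − λ) if λ ≤ (5s−3)/(4s); ≤ s/2 if (5s−3)/(4s) ≤ λ ≤ (5s+1)/(4s); and ≤ s²(λ − (5s−1)/(4s)) if λ ≥ (5s+1)/(4s). -/

import Mathlib

/-!
Substituting the coefficient formulas gives `A₃ - λA₂² = -(s/2)(w₂ - t w₁²)` with
`t = (5s - 1 - 4sλ)/2`, so the three bounds are `(s/2) max 1 |t|` evaluated on the three ranges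
of `λ`, once `|w₂ - t w₁²| ≤ max 1 |t|` is known. The latter follows from `|w₂| ≤ 1 - |w₁|²`,
which is the Schwarz–Pick inequality `|g'(0)| ≤ 1 - |g(0)|²` for `g = ω(z)/z`, a self-map of the
closed disk by the Schwarz lemma. Schwarz–Pick at the origin is in turn the Schwarz lemma applied
to `g` followed by the disk automorphism `z ↦ (z - g 0)/(1 - conj (g 0) z)`, or the maximum
modulus principle when `|g 0| = 1`.
-/

open Metric Set Filter ComplexConjugate
open scoped Topology NNReal ENNReal

noncomputable def blaschkeFactor (c : ℂ) (a : ℂ) : ℂ := (a - c) / (1 - conj c * a)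

theorem blaschkeFactor_self (c : ℂ) : blaschkeFactor c c = 0 := by
  simp [blaschkeFactor]

theorem norm_sub_sq_add_mul_eq_norm_one_sub_conj_mul_sq (a c : ℂ) :
    ‖a - c‖ ^ 2 + (1 - ‖a‖ ^ 2) * (1 - ‖c‖ ^ 2) = ‖1 - conj c * a‖ ^ 2 := by
  simp only [← Complex.normSq_eq_norm_sq, Complex.normSq_apply, Complex.sub_re,
    Complex.sub_im, Complex.mul_re, Complex.mul_im, Complex.conj_re, Complex.conj_im,
    Complex.one_re, Complex.one_im]
  ring

theorem one_sub_conj_mul_ne_zero {a c : ℂ} (hc : ‖c‖ < 1) (ha : ‖a‖ ≤ 1) :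
    1 - conj c * a ≠ 0 := by
  refine sub_ne_zero.2 fun h => ?_
  have : ‖conj c * a‖ < 1 := by
    rw [norm_mul, Complex.norm_conj]
    nlinarith [norm_nonneg a, norm_nonneg c]
  simp [← h] at this

theorem norm_blaschkeFactor_le_one {a c : ℂ} (hc : ‖c‖ < 1) (ha : ‖a‖ ≤ 1) :
    ‖blaschkeFactor c a‖ ≤ 1 := by
  have hden := norm_pos_iff.2 (one_sub_conj_mul_ne_zero hc ha)
  rw [blaschkeFactor, norm_div, div_le_one hden, ← sq_le_sq₀ (norm_nonneg _) hden.le,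
    ← norm_sub_sq_add_mul_eq_norm_one_sub_conj_mul_sq]
  have : 0 ≤ (1 - ‖a‖ ^ 2) * (1 - ‖c‖ ^ 2) := by
    apply mul_nonneg <;> nlinarith [norm_nonneg a, norm_nonneg c]
  linarith

theorem hasDerivAt_blaschkeFactor {a c : ℂ} (h : 1 - conj c * a ≠ 0) :
    HasDerivAt (blaschkeFactor c) ((1 - conj c * c) / (1 - conj c * a) ^ 2) a := by
  refine (((hasDerivAt_id a).sub_const c).div
    (((hasDerivAt_id a).const_mul (conj c)).const_sub 1) h).congr_deriv ?_
  simp only [id]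
  ring

theorem hasDerivAt_blaschkeFactor_self {c : ℂ} (hc : ‖c‖ < 1) :
    HasDerivAt (blaschkeFactor c) (((1 - ‖c‖ ^ 2 : ℝ) : ℂ)⁻¹) c := by
  have h := one_sub_conj_mul_ne_zero hc hc.le
  convert hasDerivAt_blaschkeFactor h using 1
  rw [Complex.conj_mul'] at h ⊢
  push_cast
  rw [sq (1 - _), div_mul_cancel_left₀ h]

theorem deriv_eq_zero_of_isLocalMax_norm {F : Type*} [NormedAddCommGroup F] [NormedSpace ℂ F]
    [StrictConvexSpace ℝ F] {g : ℂ → F} {c : ℂ} (hd : ∀ᶠ z in 𝓝 c, DifferentiableAt ℂ g z)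
    (hmax : IsLocalMax (norm ∘ g) c) : deriv g c = 0 := by
  have hconst : g =ᶠ[𝓝 c] fun _ => g c := Complex.eventually_eq_of_isLocalMax_norm hd hmax
  rw [hconst.deriv_eq, deriv_const]

theorem norm_deriv_le_one_sub_norm_sq {g : ℂ → ℂ}
    (hd : DifferentiableOn ℂ g (ball 0 1)) (hmaps : MapsTo g (ball 0 1) (closedBall 0 1)) :
    ‖deriv g 0‖ ≤ 1 - ‖g 0‖ ^ 2 := by
  have hball : ball (0 : ℂ) 1 ∈ 𝓝 0 := ball_mem_nhds 0 one_pos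
  have hnorm (z) (hz : z ∈ ball (0 : ℂ) 1) : ‖g z‖ ≤ 1 := mem_closedBall_zero_iff.1 (hmaps hz)
  rcases (hnorm 0 (mem_ball_self one_pos)).eq_or_lt with hg0 | hg0
  · have hmax : IsLocalMax (norm ∘ g) 0 := mem_of_superset hball fun z hz => by
      simpa [hg0] using hnorm z hz
    rw [deriv_eq_zero_of_isLocalMax_norm (mem_of_superset hball fun z hz =>
      hd.differentiableAt (isOpen_ball.mem_nhds hz)) hmax, hg0]
    norm_num
  set c := g 0
  have hφd : DifferentiableOn ℂ (blaschkeFactor c ∘ g) (ball 0 1) := fun z hz =>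
    ((hasDerivAt_blaschkeFactor (one_sub_conj_mul_ne_zero hg0 (hnorm z hz))).differentiableAt.comp
      z (hd.differentiableAt (isOpen_ball.mem_nhds hz))).differentiableWithinAt
  have hφmaps : MapsTo (blaschkeFactor c ∘ g) (ball 0 1)
      (closedBall ((blaschkeFactor c ∘ g) 0) 1) := fun z hz => by
    simpa [blaschkeFactor_self, c] using norm_blaschkeFactor_le_one hg0 (hnorm z hz)
  have hderiv : deriv (blaschkeFactor c ∘ g) 0 = ((1 - ‖c‖ ^ 2 : ℝ) : ℂ)⁻¹ * deriv g 0 :=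
    ((hasDerivAt_blaschkeFactor_self hg0).comp 0 (hd.differentiableAt hball).hasDerivAt).deriv
  have hpos : 0 < 1 - ‖c‖ ^ 2 := by nlinarith [norm_nonneg c]
  have := Complex.norm_deriv_le_one_of_mapsTo_ball hφd hφmaps one_pos
  rwa [hderiv, norm_mul, norm_inv, Complex.norm_real, Real.norm_of_nonneg hpos.le,
    inv_mul_le_iff₀ hpos, mul_one] at this

theorem norm_coeff_two_le_one_sub_norm_coeff_one_sq {ω : ℂ → ℂ}
    {p : FormalMultilinearSeries ℂ ℂ ℂ} (hp : HasFPowerSeriesOnBall ω p 0 1) (h0 : ω 0 = 0)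
    (hmaps : MapsTo ω (ball 0 1) (ball 0 1)) :
    ‖p.coeff 2‖ ≤ 1 - ‖p.coeff 1‖ ^ 2 := by
  have hd : DifferentiableOn ℂ ω (ball 0 1) := by
    have := hp.differentiableOn
    rwa [← ENNReal.coe_one, Metric.eball_coe, NNReal.coe_one] at this
  have hslope : HasFPowerSeriesAt (dslope ω 0) p.fslope 0 :=
    hp.hasFPowerSeriesAt.has_fpower_series_dslope_fslope
  have hg0 : dslope ω 0 0 = p.coeff 1 := by
    rw [dslope_same]
    exact hp.hasFPowerSeriesAt.deriv
  have hg1 : deriv (dslope ω 0) 0 = p.coeff 2 := by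
    rw [← FormalMultilinearSeries.coeff_fslope]
    exact hslope.deriv
  have hgd : DifferentiableOn ℂ (dslope ω 0) (ball 0 1) :=
    (Complex.differentiableOn_dslope (ball_mem_nhds 0 one_pos)).2 hd
  have hgmaps : MapsTo (dslope ω 0) (ball 0 1) (closedBall 0 1) := fun z hz => by
    simpa using Complex.norm_dslope_le_div_of_mapsTo_ball hd
      (by simpa [h0] using hmaps.mono_right ball_subset_closedBall) hz
  rw [← hg0, ← hg1]
  exact norm_deriv_le_one_sub_norm_sq hgd hgmaps

theorem hasFPowerSeriesOnBall_ofScalars {w : ℕ → ℂ} {f : ℂ → ℂ} {R : ℝ≥0} (hR : 0 < R)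
    (hsum : ∀ z ∈ ball (0 : ℂ) R, Summable fun n => w n * z ^ n)
    (hrep : ∀ z ∈ ball (0 : ℂ) R, f z = ∑' n, w n * z ^ n) :
    HasFPowerSeriesOnBall f (FormalMultilinearSeries.ofScalars ℂ w) 0 R := by
  set p := FormalMultilinearSeries.ofScalars ℂ w
  have hrad : (R : ℝ≥0∞) ≤ p.radius := by
    refine ENNReal.le_of_forall_nnreal_lt fun r hr => p.le_radius_of_summable ?_
    have hr : ((r : ℝ) : ℂ) ∈ ball (0 : ℂ) R := by simpa using hr
    simpa [p, Complex.norm_real] using summable_norm_iff.2 (hsum _ hr)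
  have hp := p.hasFPowerSeriesOnBall ((ENNReal.coe_pos.2 hR).trans_le hrad)
  refine (hp.mono (by simpa using hR) hrad).congr fun z hz => ?_
  rw [hrep z (by simpa using hz), FormalMultilinearSeries.sum]
  exact tsum_congr fun n => FormalMultilinearSeries.ofScalars_apply_eq w z n

theorem norm_sub_mul_sq_le_max {x y μ : ℂ} (h : ‖y‖ ≤ 1 - ‖x‖ ^ 2) :
    ‖y - μ * x ^ 2‖ ≤ max 1 ‖μ‖ := by
  have hx : ‖x‖ ^ 2 ≤ 1 := by linarith [norm_nonneg y]
  calc ‖y - μ * x ^ 2‖ ≤ ‖y‖ + ‖μ‖ * ‖x‖ ^ 2 :=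
        (norm_sub_le _ _).trans_eq (by rw [norm_mul, norm_pow])
    _ ≤ (1 - ‖x‖ ^ 2) * max 1 ‖μ‖ + ‖x‖ ^ 2 * max 1 ‖μ‖ := by
        nlinarith [le_max_left 1 ‖μ‖, le_max_right 1 ‖μ‖, sq_nonneg ‖x‖]
    _ = max 1 ‖μ‖ := by ring

theorem half_mul_max_one_abs_eq {s lam : ℝ} (hs : 0 < s) :
    (lam ≤ (5 * s - 3) / (4 * s) →
      s / 2 * max 1 |(5 * s - 1 - 4 * s * lam) / 2| = s ^ 2 * ((5 * s - 1) / (4 * s) - lam)) ∧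
    ((5 * s - 3) / (4 * s) ≤ lam ∧ lam ≤ (5 * s + 1) / (4 * s) →
      s / 2 * max 1 |(5 * s - 1 - 4 * s * lam) / 2| = s / 2) ∧
    ((5 * s + 1) / (4 * s) ≤ lam →
      s / 2 * max 1 |(5 * s - 1 - 4 * s * lam) / 2| = s ^ 2 * (lam - (5 * s - 1) / (4 * s))) := by
  have h4s : 0 < 4 * s := by positivity
  refine ⟨fun h => ?_, fun ⟨h₁, h₂⟩ => ?_, fun h => ?_⟩
  · rw [le_div_iff₀ h4s] at h
    rw [abs_of_nonneg (by linarith), max_eq_right (by linarith)]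
    field_simp
    ring
  · rw [div_le_iff₀ h4s] at h₁
    rw [le_div_iff₀ h4s] at h₂
    rw [max_eq_left (abs_le.2 ⟨by linarith, by linarith⟩), mul_one]
  · rw [div_le_iff₀ h4s] at h
    rw [abs_of_nonpos (by linarith), max_eq_right (by linarith)]
    field_simp
    ring

theorem stmt_15_general (s lam : ℝ) (hs0 : 0 < s)
    (ω : ℂ → ℂ) (w a A : ℕ → ℂ) (hw0 : w 0 = 0)
    (hsum : ∀ z ∈ Metric.ball (0 : ℂ) 1, Summable fun n => w n * z ^ n)
    (hrep : ∀ z ∈ Metric.ball (0 : ℂ) 1, ω z = ∑' n, w n * z ^ n)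
    (hb : ∀ z ∈ Metric.ball (0 : ℂ) 1, ‖ω z‖ < 1)
    (ha2 : a 2 = (s : ℂ) * w 1)
    (ha3 : a 3 = ((s : ℂ) / 2) * (w 2 + ((3 * (s : ℂ) + 1) / 2) * w 1 ^ 2))
    (hA2 : A 2 = -a 2) (hA3 : A 3 = 2 * a 2 ^ 2 - a 3) :
    (lam ≤ (5 * s - 3) / (4 * s) →
      ‖A 3 - (lam : ℂ) * A 2 ^ 2‖ ≤ s ^ 2 * ((5 * s - 1) / (4 * s) - lam)) ∧
    ((5 * s - 3) / (4 * s) ≤ lam ∧ lam ≤ (5 * s + 1) / (4 * s) →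
      ‖A 3 - (lam : ℂ) * A 2 ^ 2‖ ≤ s / 2) ∧
    ((5 * s + 1) / (4 * s) ≤ lam →
      ‖A 3 - (lam : ℂ) * A 2 ^ 2‖ ≤ s ^ 2 * (lam - (5 * s - 1) / (4 * s))) := by
  have hω : HasFPowerSeriesOnBall ω (FormalMultilinearSeries.ofScalars ℂ w) 0 1 :=
    hasFPowerSeriesOnBall_ofScalars one_pos (by simpa using hsum) (by simpa using hrep)
  have hω0 : ω 0 = 0 := by
    rw [hrep 0 (mem_ball_self one_pos), tsum_eq_single 0 fun n hn => by simp [hn]]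
    simp [hw0]
  have hcoeff : ‖w 2‖ ≤ 1 - ‖w 1‖ ^ 2 := by
    simpa using norm_coeff_two_le_one_sub_norm_coeff_one_sq hω hω0
      fun z hz => mem_ball_zero_iff.2 (hb z hz)
  set t : ℝ := (5 * s - 1 - 4 * s * lam) / 2
  have hA : A 3 - (lam : ℂ) * A 2 ^ 2 = -((s : ℂ) / 2) * (w 2 - (t : ℂ) * w 1 ^ 2) := by
    rw [hA3, hA2, ha2, ha3]
    push_cast [t]
    ring
  have hbound : ‖A 3 - (lam : ℂ) * A 2 ^ 2‖ ≤ s / 2 * max 1 |t| := by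
    rw [hA, norm_mul, norm_neg, norm_div, Complex.norm_real, Real.norm_of_nonneg hs0.le,
      Complex.norm_ofNat]
    simpa using mul_le_mul_of_nonneg_left (norm_sub_mul_sq_le_max (μ := t) hcoeff)
      (by positivity : 0 ≤ s / 2)
  obtain ⟨h₁, h₂, h₃⟩ := half_mul_max_one_abs_eq (lam := lam) hs0
  exact ⟨fun h => hbound.trans_eq (h₁ h), fun h => hbound.trans_eq (h₂ h),
    fun h => hbound.trans_eq (h₃ h)⟩

/-- Fekete–Szegő inequalities for inverse coefficients in `ST_hpl(s)`,
stated (as sanctioned by the context) via a Schwarz function `ω` with coefficients `w`,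
`a₂ = s w₁`, `a₃ = (s/2)(w₂ + ((3s+1)/2)w₁²)`, `A₂ = -a₂`, `A₃ = 2a₂² - a₃`. -/
theorem stmt_15 (s lam : ℝ) (hs0 : 0 < s) (hs1 : s ≤ 1)
    (ω : ℂ → ℂ) (w a A : ℕ → ℂ) (hw0 : w 0 = 0)
    (hsum : ∀ z ∈ Metric.ball (0 : ℂ) 1, Summable fun n => w n * z ^ n)
    (hrep : ∀ z ∈ Metric.ball (0 : ℂ) 1, ω z = ∑' n, w n * z ^ n)
    (hb : ∀ z ∈ Metric.ball (0 : ℂ) 1, ‖ω z‖ < 1)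
    (ha2 : a 2 = (s : ℂ) * w 1)
    (ha3 : a 3 = ((s : ℂ) / 2) * (w 2 + ((3 * (s : ℂ) + 1) / 2) * w 1 ^ 2))
    (hA2 : A 2 = -a 2) (hA3 : A 3 = 2 * a 2 ^ 2 - a 3) :
    (lam ≤ (5 * s - 3) / (4 * s) →
      ‖A 3 - (lam : ℂ) * A 2 ^ 2‖ ≤ s ^ 2 * ((5 * s - 1) / (4 * s) - lam)) ∧
    ((5 * s - 3) / (4 * s) ≤ lam ∧ lam ≤ (5 * s + 1) / (4 * s) →
      ‖A 3 - (lam : ℂ) * A 2 ^ 2‖ ≤ s / 2) ∧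
    ((5 * s + 1) / (4 * s) ≤ lam →
      ‖A 3 - (lam : ℂ) * A 2 ^ 2‖ ≤ s ^ 2 * (lam - (5 * s - 1) / (4 * s))) :=
  stmt_15_general s lam hs0 ω w a A hw0 hsum hrep hb ha2 ha3 hA2 hA3
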